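/- arXiv:2106.00399 — 3 statements merged into one kernel-verified Lean document; each statement's English description precedes it below -/
import Mathlib

section
/- Let K be an absorptive, fully-continuous commutative semiring. Then for all a, b, c ∈ K: if b ≤ c + a·b, then b ≤ c + a^∞·b, where a^∞ := ⨅_{n ∈ ℕ} a^n is the infinitary power and ≤ is the natural order. -/
/-- An absorptive, fully-continuous commutative semiring: a commutative semiring
whose natural order (`a ≤ b ↔ a + b = b`) is a complete lattice, with `1 + a = 1`,
and such that addition and multiplication commute with suprema and infima of
nonempty chains. -/
class AbsorptiveFC (K : Type*) extends CommSemiring K, CompleteLattice K where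
  absorb : ∀ a : K, 1 + a = 1
  le_iff_add : ∀ a b : K, a ≤ b ↔ a + b = b
  add_sSup_chain : ∀ (a : K) (C : Set K), C.Nonempty → IsChain (· ≤ ·) C →
    a + sSup C = sSup ((fun c => a + c) '' C)
  add_sInf_chain : ∀ (a : K) (C : Set K), C.Nonempty → IsChain (· ≤ ·) C →
    a + sInf C = sInf ((fun c => a + c) '' C)
  mul_sSup_chain : ∀ (a : K) (C : Set K), C.Nonempty → IsChain (· ≤ ·) C →
    a * sSup C = sSup ((fun c => a * c) '' C)
  mul_sInf_chain : ∀ (a : K) (C : Set K), C.Nonempty → IsChain (· ≤ ·) C →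
    a * sInf C = sInf ((fun c => a * c) '' C)

/-- The infinitary power `a^∞ = ⨅ n, a ^ n`. -/
noncomputable def ipow {K : Type*} [AbsorptiveFC K] (a : K) : K := ⨅ n : ℕ, a ^ n

section Aux
variable {K : Type*} [AbsorptiveFC K]

lemma afc_le_one (a : K) : a ≤ 1 :=
  (AbsorptiveFC.le_iff_add a 1).mpr (by rw [add_comm]; exact AbsorptiveFC.absorb a)

lemma afc_mul_le_mul_left {x y : K} (z : K) (h : x ≤ y) : z * x ≤ z * y := by
  rw [AbsorptiveFC.le_iff_add] at h ⊢
  rw [← mul_add, h]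

lemma afc_add_le_add {x y u v : K} (h1 : x ≤ y) (h2 : u ≤ v) : x + u ≤ y + v := by
  rw [AbsorptiveFC.le_iff_add] at h1 h2 ⊢
  calc x + u + (y + v) = (x + y) + (u + v) := by ring
    _ = y + v := by rw [h1, h2]

lemma afc_le_add_left (x y : K) : x ≤ y + x := by
  rw [AbsorptiveFC.le_iff_add]
  have : x + x = x := by
    have := AbsorptiveFC.absorb (1 : K)
    calc x + x = (1 + 1) * x := by ring
      _ = x := by rw [this, one_mul]
  calc x + (y + x) = y + (x + x) := by ring
    _ = y + x := by rw [this]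

lemma afc_chain_of_antitone {f : ℕ → K} (hf : Antitone f) :
    IsChain (· ≤ ·) (Set.range f) := by
  rintro _ ⟨m, rfl⟩ _ ⟨n, rfl⟩ _
  rcases le_total m n with hmn | hmn
  · exact Or.inr (hf hmn)
  · exact Or.inl (hf hmn)

lemma afc_pow_antitone (a : K) : Antitone (fun n : ℕ => a ^ n) := by
  apply antitone_nat_of_succ_le
  intro n
  have := afc_mul_le_mul_left (a ^ n) (afc_le_one a)
  simpa [pow_succ, mul_comm] using this

end Aux

/-- in an absorptive, fully-continuous commutative semiring,
`b ≤ c + a·b` implies `b ≤ c + a^∞·b`. -/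

theorem ipow_ind {K : Type*} [AbsorptiveFC K] (a b c : K)
    (h : b ≤ c + a * b) : b ≤ c + ipow a * b := by
  have hc : c + c = c := by
    have := AbsorptiveFC.absorb (1 : K)
    calc c + c = (1 + 1) * c := by ring
      _ = c := by rw [this, one_mul]
  have hpow : ∀ n : ℕ, b ≤ c + a ^ n * b := by
    intro n
    induction n with
    | zero => simpa using afc_le_add_left b c
    | succ n ih =>
      calc b ≤ c + a * b := h
        _ ≤ c + a * (c + a ^ n * b) := afc_add_le_add le_rfl (afc_mul_le_mul_left a ih)
        _ = c + (a * c + a ^ (n + 1) * b) := by ring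
        _ ≤ c + (c + a ^ (n + 1) * b) := by
            refine afc_add_le_add le_rfl (afc_add_le_add ?_ le_rfl)
            simpa [mul_comm] using afc_mul_le_mul_left c (afc_le_one a)
        _ = c + c + a ^ (n + 1) * b := by ring
        _ = c + a ^ (n + 1) * b := by rw [hc]
  -- now pass to the infimum
  set C : Set K := Set.range (fun n : ℕ => a ^ n) with hC
  have hCne : C.Nonempty := Set.range_nonempty _
  have hCchain : IsChain (· ≤ ·) C := afc_chain_of_antitone (afc_pow_antitone a)
  have h1 : ipow a * b = ⨅ n : ℕ, a ^ n * b := by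
    have := AbsorptiveFC.mul_sInf_chain b C hCne hCchain
    rw [mul_comm, ipow, iInf, ← hC, this, ← Set.range_comp, iInf]
    congr 1
    ext x
    simp [Function.comp, mul_comm]
  have hC2ne : (Set.range (fun n : ℕ => a ^ n * b)).Nonempty := Set.range_nonempty _
  have hC2chain : IsChain (· ≤ ·) (Set.range (fun n : ℕ => a ^ n * b)) := by
    have : Antitone (fun n : ℕ => a ^ n * b) := fun m n hmn => by
      simpa [mul_comm] using afc_mul_le_mul_left b (afc_pow_antitone a hmn)
    exact afc_chain_of_antitone this
  have h2 : c + ipow a * b = ⨅ n : ℕ, (c + a ^ n * b) := by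
    rw [h1, iInf, AbsorptiveFC.add_sInf_chain c _ hC2ne hC2chain, ← Set.range_comp]
    rfl
  rw [h2]
  exact le_iInf hpow
end

section
/- Let K be an absorptive, fully-continuous commutative semiring. Then the infinitary power is additive: for all a, b ∈ K, (a + b)^∞ = a^∞ + b^∞, where x^∞ := ⨅_{n ∈ ℕ} x^n. -/
/-!
Addition is the join of the natural order and `1` is its top, so powers of an element
decrease. By induction on `m` and `n`, `(a + b) ^ (m + n) ≤ a ^ m + b ^ n`: peel one factor
`a + b` off, apply the induction hypotheses to the two terms, and absorb the stray factors
`a, b ≤ 1`. Continuity of `+` along the descending chains `a ^ m` and `b ^ n` turns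
`a^∞ + b^∞` into `⨅ m n, a ^ m + b ^ n`, which therefore bounds `(a + b)^∞`; the reverse
inequality is monotonicity of `x ↦ x^∞`.
-/

namespace AbsorptiveFC

variable {K : Type*} [AbsorptiveFC K]

theorem le_one (a : K) : a ≤ 1 :=
  (le_iff_add a 1).2 (by rw [add_comm, absorb])

theorem add_self (a : K) : a + a = a := by
  rw [← mul_one a, ← mul_add, absorb]

abbrev toIdemCommSemiring : IdemCommSemiring K where
  __ := ‹AbsorptiveFC K›
  add_eq_sup a b := by
    refine le_antisymm ?_ ?_
    · rw [le_iff_add, add_assoc, (le_iff_add b _).1 le_sup_right, (le_iff_add a _).1 le_sup_left]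
    · refine sup_le ((le_iff_add _ _).2 ?_) ((le_iff_add _ _).2 ?_)
      · rw [← add_assoc, add_self]
      · rw [add_comm a, ← add_assoc, add_self]

-- Not global: `a + b` in statements about `AbsorptiveFC` would then elaborate through it.
attribute [local instance] toIdemCommSemiring

theorem add_iInf_of_antitone {ι : Type*} [LinearOrder ι] [Nonempty ι] (x : K) {f : ι → K}
    (hf : Antitone f) :
    x + ⨅ n, f n = ⨅ n, x + f n := by
  rw [iInf, add_sInf_chain x _ (Set.range_nonempty f) hf.isChain_range, ← Set.range_comp]
  rfl

theorem pow_antitone (a : K) : Antitone (a ^ ·) :=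
  fun _ _ h => pow_le_pow_right_of_le_one' (le_one a) h

theorem ipow_mono : Monotone (ipow : K → K) :=
  fun _ _ h => iInf_mono fun n => pow_le_pow_left' h n

theorem add_ipow (x a : K) : x + ipow a = ⨅ n : ℕ, x + a ^ n :=
  add_iInf_of_antitone x (pow_antitone a)

theorem pow_add_le_pow_add_pow (a b : K) (m n : ℕ) : (a + b) ^ (m + n) ≤ a ^ m + b ^ n := by
  induction m generalizing n with
  | zero => rw [pow_zero]; exact (le_one _).trans le_self_add
  | succ m ihm =>
    induction n with
    | zero => rw [pow_zero]; exact (le_one _).trans le_add_self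
    | succ n ihn =>
      have hb : b ^ (n + 1) * a ≤ b ^ (n + 1) := mul_le_of_le_one_right' (le_one a)
      have ha : a ^ (m + 1) * b ≤ a ^ (m + 1) := mul_le_of_le_one_right' (le_one b)
      calc (a + b) ^ (m + 1 + (n + 1))
          = (a + b) ^ (m + (n + 1)) * a + (a + b) ^ (m + 1 + n) * b := by ring
        _ ≤ (a ^ m + b ^ (n + 1)) * a + (a ^ (m + 1) + b ^ n) * b := by
          gcongr
          exact ihm (n + 1)
        _ = (a ^ (m + 1) + b ^ (n + 1) * a) + (a ^ (m + 1) * b + b ^ (n + 1)) := by ring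
        _ ≤ (a ^ (m + 1) + b ^ (n + 1)) + (a ^ (m + 1) + b ^ (n + 1)) := by gcongr
        _ = a ^ (m + 1) + b ^ (n + 1) := add_self _

theorem add_ipow_le_ipow_add (a b : K) : ipow a + ipow b ≤ ipow (a + b) :=
  add_le (ipow_mono le_self_add) (ipow_mono le_add_self)

theorem ipow_add_le_add_ipow (a b : K) : ipow (a + b) ≤ ipow a + ipow b := by
  rw [add_ipow]
  refine le_iInf fun n => ?_
  rw [add_comm (ipow a), add_ipow]
  refine le_iInf fun m => ?_
  calc ipow (a + b) ≤ (a + b) ^ (m + n) := iInf_le _ _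
    _ ≤ a ^ m + b ^ n := pow_add_le_pow_add_pow a b m n
    _ = b ^ n + a ^ m := add_comm _ _

end AbsorptiveFC

/-- the infinitary power is additive: `(a+b)^∞ = a^∞ + b^∞`. -/
theorem ipow_add {K : Type*} [AbsorptiveFC K] (a b : K) :
    ipow (a + b) = ipow a + ipow b :=
  le_antisymm (AbsorptiveFC.ipow_add_le_add_ipow a b) (AbsorptiveFC.add_ipow_le_ipow_add a b)
end

section
/- In every ∞-algebra, the infinitary power operation is multiplicative: for all a, b, (a·b)^∞ = a^∞ · b^∞. -/
/-- An absorptive commutative semiring: a commutative semiring with `1 + a = 1`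
for all `a`, equipped with its natural order `a ≤ b ↔ a + b = b` (a partial
order by idempotence). -/
class AbsorptiveSemiring (K : Type*) extends CommSemiring K, PartialOrder K where
  absorb : ∀ a : K, 1 + a = 1
  le_iff_add : ∀ a b : K, a ≤ b ↔ a + b = b

/-- An `∞`-algebra: an absorptive commutative semiring with a unary operation
`a ↦ a^∞` satisfying the axioms (∞-abs) `a^∞ = a · a^∞` and
(∞-ind) `b ≤ c + a·b → b ≤ c + a^∞·b`. -/
class InfAlgebra (K : Type*) extends AbsorptiveSemiring K where
  infPow : K → K
  infPow_abs : ∀ a : K, infPow a = a * infPow a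
  infPow_ind : ∀ a b c : K, b ≤ c + a * b → b ≤ c + infPow a * b

open InfAlgebra

lemma AbsSR.le_one {K : Type*} [AbsorptiveSemiring K] (a : K) : a ≤ 1 := by
  rw [AbsorptiveSemiring.le_iff_add, add_comm]
  exact AbsorptiveSemiring.absorb a

lemma AbsSR.mul_le_mul {K : Type*} [AbsorptiveSemiring K] (c : K) {a b : K}
    (h : a ≤ b) : c * a ≤ c * b := by
  rw [AbsorptiveSemiring.le_iff_add] at h ⊢
  rw [← mul_add, h]

/-- in every `∞`-algebra, `(a·b)^∞ = a^∞ · b^∞`. -/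
theorem infPow_mul {K : Type*} [InfAlgebra K] (a b : K) :
    infPow (a * b) = infPow a * infPow b := by
  apply le_antisymm
  · -- infPow (a*b) ≤ infPow a * infPow (a*b), and similarly for b
    have key : ∀ c d : K, infPow (c * d) ≤ infPow c * infPow (c * d) := by
      intro c d
      have h : infPow (c * d) ≤ 0 + c * infPow (c * d) := by
        rw [zero_add]
        calc infPow (c * d) = c * (d * infPow (c * d)) := by
              rw [← mul_assoc, ← infPow_abs]
          _ ≤ c * (1 * infPow (c * d)) := by
              apply AbsSR.mul_le_mul
              rw [mul_comm d, mul_comm 1]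
              exact AbsSR.mul_le_mul _ (AbsSR.le_one d)
          _ = c * infPow (c * d) := by rw [one_mul]
      have := infPow_ind c (infPow (c * d)) 0 h
      rwa [zero_add] at this
    have h1 := key a b
    have h2 := key b a
    rw [mul_comm b a] at h2
    calc infPow (a * b) ≤ infPow a * infPow (a * b) := h1
      _ ≤ infPow a * (infPow b * infPow (a * b)) := AbsSR.mul_le_mul _ h2
      _ ≤ infPow a * (infPow b * 1) :=
          AbsSR.mul_le_mul _ (AbsSR.mul_le_mul _ (AbsSR.le_one _))
      _ = infPow a * infPow b := by rw [mul_one]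
  · have h : infPow a * infPow b ≤ 0 + (a * b) * (infPow a * infPow b) := by
      rw [zero_add]
      apply le_of_eq
      calc infPow a * infPow b = (a * infPow a) * (b * infPow b) := by
            rw [← infPow_abs, ← infPow_abs]
        _ = (a * b) * (infPow a * infPow b) := by ring
    have h2 := infPow_ind (a * b) (infPow a * infPow b) 0 h
    rw [zero_add] at h2
    calc infPow a * infPow b ≤ infPow (a * b) * (infPow a * infPow b) := h2
      _ ≤ infPow (a * b) * 1 := AbsSR.mul_le_mul _ (AbsSR.le_one _)
      _ = infPow (a * b) := mul_one _
end
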